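/- If σ is a complete cherry-reduction sequence of length k for a phylogenetic network N on X, then k = |X| + r(N) − 1, where r(N) is the reticulation number of N. -/

import Mathlib

/-!  Formalisation preliminaries for rooted and unrooted binary phylogenetic
networks, cherry reductions, cherry-reduction sequences and cherry-picking
sequences, following Döcker & Linz. -/

/-- A finite directed graph whose vertices are natural numbers. -/
structure DNet where
  verts : Finset ℕ
  arcs : Finset (ℕ × ℕ)

namespace DNet

/-- in-degree of a vertex -/
def inDeg (N : DNet) (v : ℕ) : ℕ := (N.arcs.filter (fun p => p.2 = v)).card

/-- out-degree of a vertex -/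
def outDeg (N : DNet) (v : ℕ) : ℕ := (N.arcs.filter (fun p => p.1 = v)).card

/-- the arc relation -/
def Arc (N : DNet) (u v : ℕ) : Prop := (u, v) ∈ N.arcs

/-- the digraph has no directed cycle -/
def Acyclic (N : DNet) : Prop := ∀ v, ¬ Relation.TransGen N.Arc v v

/-- root: in-degree 0 and out-degree 2 -/
def IsRoot (N : DNet) (v : ℕ) : Prop := v ∈ N.verts ∧ N.inDeg v = 0 ∧ N.outDeg v = 2

/-- leaf: in-degree 1 and out-degree 0 -/
def IsLeaf (N : DNet) (v : ℕ) : Prop := v ∈ N.verts ∧ N.inDeg v = 1 ∧ N.outDeg v = 0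

/-- tree vertex: in-degree 1 and out-degree 2 -/
def IsTreeVertex (N : DNet) (v : ℕ) : Prop := v ∈ N.verts ∧ N.inDeg v = 1 ∧ N.outDeg v = 2

/-- reticulation: in-degree 2 and out-degree 1 -/
def IsRet (N : DNet) (v : ℕ) : Prop := v ∈ N.verts ∧ N.inDeg v = 2 ∧ N.outDeg v = 1

/-- the network consists of a single vertex -/
def SingleVertex (N : DNet) : Prop := N.verts.card = 1 ∧ N.arcs = ∅

/-- the reticulation number of a rooted network: number of in-degree-2 vertices -/
def retNum (N : DNet) : ℕ := (N.verts.filter (fun v => N.inDeg v = 2)).card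

/-- tree-child: every vertex with a child has a child that is a tree vertex or a leaf -/
def TreeChild (N : DNet) : Prop :=
  ∀ v ∈ N.verts, N.outDeg v ≠ 0 → ∃ c, (v, c) ∈ N.arcs ∧ (N.IsTreeVertex c ∨ N.IsLeaf c)

/-- a stack: two reticulations joined by an arc -/
def HasStack (N : DNet) : Prop := ∃ u v, N.IsRet u ∧ N.IsRet v ∧ (u, v) ∈ N.arcs

/-- a pair of sibling reticulations: two reticulations with a common parent -/
def HasSiblingRets (N : DNet) : Prop :=
  ∃ p u v, u ≠ v ∧ N.IsRet u ∧ N.IsRet v ∧ (p, u) ∈ N.arcs ∧ (p, v) ∈ N.arcs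

/-- stack-free -/
def StackFree (N : DNet) : Prop := ¬ N.HasStack

end DNet

/-- `N` is a rooted binary phylogenetic network with leaf set `X`
(including the degenerate single-vertex network when `|X| = 1`). -/
def IsRootedBinaryNet (N : DNet) (X : Finset ℕ) : Prop :=
  (∃ x, X = {x} ∧ N.verts = {x} ∧ N.arcs = ∅) ∨
  ((∀ p ∈ N.arcs, p.1 ∈ N.verts ∧ p.2 ∈ N.verts) ∧
   (∀ p ∈ N.arcs, p.1 ≠ p.2) ∧
   N.Acyclic ∧
   (∃! ρ, ρ ∈ N.verts ∧ N.inDeg ρ = 0) ∧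
   (∀ v ∈ N.verts, N.IsRoot v ∨ N.IsLeaf v ∨ N.IsTreeVertex v ∨ N.IsRet v) ∧
   (∀ v, N.IsLeaf v ↔ v ∈ X))

/-- `[a,b]` is a cherry of the rooted network `N` (with `a` the leaf to be deleted). -/
def RCherry (N : DNet) (a b : ℕ) : Prop :=
  a ≠ b ∧ N.IsLeaf a ∧ N.IsLeaf b ∧ ∃ p, (p, a) ∈ N.arcs ∧ (p, b) ∈ N.arcs

/-- `(a,b)` is a reticulated cherry of the rooted network `N` with reticulation leaf `a`:
the parent of `a` is a reticulation and receives an arc from the parent of `b`. -/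
def RRetCherry (N : DNet) (a b : ℕ) : Prop :=
  a ≠ b ∧ N.IsLeaf a ∧ N.IsLeaf b ∧
  ∃ pa pb, (pa, a) ∈ N.arcs ∧ (pb, b) ∈ N.arcs ∧ N.IsRet pa ∧ (pb, pa) ∈ N.arcs

/-- `M` is obtained from the rooted network `N` by reducing the cherry `[a,b]`:
delete `a` and suppress (or, if it is the root, delete) the resulting degree-2 vertex. -/
def RReduceCherry (N M : DNet) (a b : ℕ) : Prop :=
  RCherry N a b ∧
  ∃ p, (p, a) ∈ N.arcs ∧ (p, b) ∈ N.arcs ∧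
    ((N.inDeg p = 0 ∧ M.verts = N.verts \ {a, p} ∧ M.arcs = N.arcs \ {(p, a), (p, b)}) ∨
     (∃ g, (g, p) ∈ N.arcs ∧ M.verts = N.verts \ {a, p} ∧
        M.arcs = insert (g, b) (N.arcs \ {(g, p), (p, a), (p, b)})))

/-- `M` is obtained from the rooted network `N` by reducing the reticulated cherry `(a,b)`
with reticulation leaf `a`: delete the reticulation arc `(p_b, p_a)` and suppress the two
resulting degree-2 vertices. -/
def RReduceRetCherry (N M : DNet) (a b : ℕ) : Prop :=
  RRetCherry N a b ∧
  ∃ pa pb qa qb, (pa, a) ∈ N.arcs ∧ (pb, b) ∈ N.arcs ∧ N.IsRet pa ∧ (pb, pa) ∈ N.arcs ∧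
    (qa, pa) ∈ N.arcs ∧ qa ≠ pb ∧ (qb, pb) ∈ N.arcs ∧
    M.verts = N.verts \ {pa, pb} ∧
    M.arcs = insert (qa, a) (insert (qb, b)
      (N.arcs \ {(pb, pa), (pa, a), (qa, pa), (pb, b), (qb, pb)}))

/-- A recorded reduction: either a cherry pair `[x,y]` or a reticulated-cherry pair `(x,y)`
(the deleted leaf, resp. the reticulation leaf, is listed first). -/
inductive Pick where
  | cherry (x y : ℕ)
  | ret (x y : ℕ)
deriving DecidableEq

namespace Pick

/-- first coordinate -/
def fst : Pick → ℕ
  | cherry x _ => x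
  | ret x _ => x

/-- second coordinate -/
def snd : Pick → ℕ
  | cherry _ y => y
  | ret _ y => y

/-- the pair contains the element `z` -/
def Contains (r : Pick) (z : ℕ) : Prop := r.fst = z ∨ r.snd = z

/-- the pair is a reticulated-cherry pair -/
def IsRetPair : Pick → Prop
  | cherry _ _ => False
  | ret _ _ => True

/-- the pair is a cherry pair -/
def IsCherryPair : Pick → Prop
  | cherry _ _ => True
  | ret _ _ => False

end Pick

/-- The step from `N` to `M` is the cherry reduction recorded by the pick `r`
(rooted version). -/
def RStep (N M : DNet) : Pick → Prop
  | .cherry x y => RReduceCherry N M x y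
  | .ret x y => RReduceRetCherry N M x y

/-- `(Ns 0, …, Ns k)` is a cherry-reduction sequence of rooted networks whose associated
cherry-picking sequence is `(rs 0, …, rs (k-1))`. -/
def RCherrySeq (Ns : ℕ → DNet) (rs : ℕ → Pick) (k : ℕ) : Prop :=
  ∀ i < k, RStep (Ns i) (Ns (i + 1)) (rs i)

/-- `(Ns 0, …, Ns k)` is a cherry-reduction sequence of rooted networks. -/
def RReductionSeq (Ns : ℕ → DNet) (k : ℕ) : Prop :=
  ∀ i < k, ∃ r, RStep (Ns i) (Ns (i + 1)) r

/-- `R` is a rooted orchard network: it admits a complete cherry-reduction sequence. -/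
def Orchard (R : DNet) : Prop :=
  ∃ Ns k, Ns 0 = R ∧ RReductionSeq Ns k ∧ (Ns k).SingleVertex

/-- `j = s(i)`: the smallest index `j > i` (within the sequence of length `k`) such that
`rs j` contains the first coordinate of `rs i`. -/
def SuccAt (rs : ℕ → Pick) (k i j : ℕ) : Prop :=
  i < j ∧ j < k ∧ (rs j).Contains (rs i).fst ∧
  ∀ l, i < l → l < j → ¬ (rs l).Contains (rs i).fst

/-- Property (P1): the successor pair of every reticulated-cherry pair, if it exists,
is a cherry pair. -/
def SeqP1 (rs : ℕ → Pick) (k : ℕ) : Prop :=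
  ∀ i j, (rs i).IsRetPair → SuccAt rs k i j → (rs j).IsCherryPair

/-- Property (P2): no element of the sequence is the successor pair of two distinct
reticulated-cherry pairs. -/
def SeqP2 (rs : ℕ → Pick) (k : ℕ) : Prop :=
  ∀ i i' j, i ≠ i' → (rs i).IsRetPair → (rs i').IsRetPair →
    SuccAt rs k i j → SuccAt rs k i' j → False

/-- A tree-child cherry-picking sequence: one satisfying (P1) and (P2). -/
def TreeChildSeq (rs : ℕ → Pick) (k : ℕ) : Prop := SeqP1 rs k ∧ SeqP2 rs k

/-- Property (P3): the first coordinate of each pair does not occur as the second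
coordinate of any later pair. -/
def SeqP3 (rs : ℕ → Pick) (k : ℕ) : Prop :=
  ∀ i j, i < j → j < k → (rs i).fst ≠ (rs j).snd

/-- A finite undirected graph whose vertices are natural numbers. -/
structure UNet where
  verts : Finset ℕ
  edges : Finset (Sym2 ℕ)

namespace UNet

/-- degree of a vertex -/
def deg (U : UNet) (v : ℕ) : ℕ := (U.edges.filter (fun e => v ∈ e)).card

/-- adjacency -/
def Adj (U : UNet) (u v : ℕ) : Prop := u ≠ v ∧ s(u, v) ∈ U.edges

/-- connectedness -/
def Connected (U : UNet) : Prop :=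
  ∀ u ∈ U.verts, ∀ v ∈ U.verts, Relation.ReflTransGen U.Adj u v

/-- leaf: degree-1 vertex -/
def IsLeaf (U : UNet) (v : ℕ) : Prop := v ∈ U.verts ∧ U.deg v = 1

/-- the network consists of a single vertex -/
def SingleVertex (U : UNet) : Prop := U.verts.card = 1 ∧ U.edges = ∅

/-- the reticulation number of an unrooted network: `|E| - (|V| - 1)` -/
def retNum (U : UNet) : ℕ := U.edges.card - (U.verts.card - 1)

end UNet

/-- `U` is an unrooted binary phylogenetic network with leaf set `X`
(including the degenerate single-vertex network when `|X| = 1`). -/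
def IsUnrootedBinaryNet (U : UNet) (X : Finset ℕ) : Prop :=
  (∃ x, X = {x} ∧ U.verts = {x} ∧ U.edges = ∅) ∨
  ((∀ e ∈ U.edges, ¬ e.IsDiag ∧ ∀ v ∈ e, v ∈ U.verts) ∧
   U.Connected ∧
   (∀ v ∈ U.verts, U.deg v = 1 ∨ U.deg v = 3) ∧
   (∀ v, U.IsLeaf v ↔ v ∈ X))

/-- `[a,b]` is a cherry of the unrooted network `U`. -/
def UCherry (U : UNet) (a b : ℕ) : Prop :=
  a ≠ b ∧ U.IsLeaf a ∧ U.IsLeaf b ∧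
  ((∃ p, s(a, p) ∈ U.edges ∧ s(b, p) ∈ U.edges ∧ p ≠ a ∧ p ≠ b) ∨ U.edges = {s(a, b)})

/-- the edge `{u,v}` lies on a cycle of `U` -/
def UOnCycle (U : UNet) (u v : ℕ) : Prop :=
  s(u, v) ∈ U.edges ∧
  Relation.ReflTransGen (fun x y => x ≠ y ∧ s(x, y) ∈ U.edges ∧ s(x, y) ≠ s(u, v)) u v

/-- `(a,b)` is a reticulated cherry of the unrooted network `U` with reticulation
edge `{u,v}`. -/
def URetCherry (U : UNet) (a b : ℕ) : Prop :=
  a ≠ b ∧ U.IsLeaf a ∧ U.IsLeaf b ∧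
  ∃ u v, s(a, u) ∈ U.edges ∧ s(u, v) ∈ U.edges ∧ s(v, b) ∈ U.edges ∧
    u ≠ v ∧ u ≠ a ∧ v ≠ b ∧ UOnCycle U u v

/-- `W` is obtained from `U` by reducing the cherry `[a,b]`: delete `a` and, if `U` has
at least two edges, suppress the resulting degree-2 vertex. -/
def UReduceCherry (U W : UNet) (a b : ℕ) : Prop :=
  UCherry U a b ∧
  ((U.edges = {s(a, b)} ∧ W.verts = U.verts \ {a} ∧ W.edges = ∅) ∨
   (∃ p g, s(a, p) ∈ U.edges ∧ s(b, p) ∈ U.edges ∧ s(p, g) ∈ U.edges ∧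
      p ≠ a ∧ p ≠ b ∧ g ≠ a ∧ g ≠ b ∧ g ≠ p ∧
      W.verts = U.verts \ {a, p} ∧
      W.edges = insert s(b, g) (U.edges \ {s(a, p), s(b, p), s(p, g)})))

/-- `W` is obtained from `U` by reducing the reticulated cherry `(a,b)`: delete the
reticulation edge `{u,v}` and suppress the two resulting degree-2 vertices. -/
def UReduceRetCherry (U W : UNet) (a b : ℕ) : Prop :=
  URetCherry U a b ∧
  ∃ u v ga gb, s(a, u) ∈ U.edges ∧ s(u, v) ∈ U.edges ∧ s(v, b) ∈ U.edges ∧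
    u ≠ v ∧ u ≠ a ∧ v ≠ b ∧ UOnCycle U u v ∧
    s(u, ga) ∈ U.edges ∧ ga ≠ a ∧ ga ≠ v ∧ ga ≠ u ∧
    s(v, gb) ∈ U.edges ∧ gb ≠ b ∧ gb ≠ u ∧ gb ≠ v ∧
    W.verts = U.verts \ {u, v} ∧
    W.edges = insert s(a, ga) (insert s(b, gb)
      (U.edges \ {s(u, v), s(a, u), s(u, ga), s(v, b), s(v, gb)}))

/-- The step from `U` to `W` is the cherry reduction recorded by the pick `r`
(unrooted version). -/
def UStep (U W : UNet) : Pick → Prop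
  | .cherry x y => UReduceCherry U W x y
  | .ret x y => UReduceRetCherry U W x y

/-- `(Us 0, …, Us k)` is a cherry-reduction sequence of unrooted networks whose associated
cherry-picking sequence is `(rs 0, …, rs (k-1))`. -/
def UCherrySeq (Us : ℕ → UNet) (rs : ℕ → Pick) (k : ℕ) : Prop :=
  ∀ i < k, UStep (Us i) (Us (i + 1)) (rs i)

/-- `(Us 0, …, Us k)` is a cherry-reduction sequence of unrooted networks. -/
def UReductionSeq (Us : ℕ → UNet) (k : ℕ) : Prop :=
  ∀ i < k, ∃ r, UStep (Us i) (Us (i + 1)) r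

/-- The rooted network `R` is an orientation of the unrooted network `U`: `U` is obtained
from `R` by forgetting arc directions and suppressing the root. -/
def IsOrientationOf (R : DNet) (U : UNet) : Prop :=
  (R.arcs = ∅ ∧ U.edges = ∅ ∧ U.verts = R.verts) ∨
  (∃ ρ c₁ c₂, ρ ∈ R.verts ∧ R.inDeg ρ = 0 ∧ c₁ ≠ c₂ ∧
    (ρ, c₁) ∈ R.arcs ∧ (ρ, c₂) ∈ R.arcs ∧
    U.verts = R.verts.erase ρ ∧
    U.edges = insert s(c₁, c₂)
      ((R.arcs.filter (fun p => p.1 ≠ ρ)).image (fun p => s(p.1, p.2))))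

/-- `U` is an unrooted tree-child network on `X`: it has a tree-child orientation. -/
def UnrootedTreeChild (U : UNet) (X : Finset ℕ) : Prop :=
  ∃ R : DNet, IsRootedBinaryNet R X ∧ R.TreeChild ∧ IsOrientationOf R U

/-- The pick `r` is one of the picks associated with the recorded reduction `p`:
it must agree with `p` on cherry reductions, and may swap the two coordinates of a
reticulated-cherry reduction. -/
def PickAssoc : Pick → Pick → Prop
  | .cherry x y, r => r = .cherry x y
  | .ret x y, r => r = .ret x y ∨ r = .ret y x

/-- `X`-labelled isomorphism of unrooted networks. -/
def UIso (X : Finset ℕ) (U W : UNet) : Prop :=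
  ∃ f : ℕ → ℕ, Set.BijOn f ↑U.verts ↑W.verts ∧ (∀ x ∈ X, f x = x) ∧
    W.edges = U.edges.image (Sym2.map f)

/-! Each reduction of a rooted network deletes exactly two vertices, so a complete sequence of
length `k` starts from `2k + 1` vertices, while the handshake lemma gives `2|X| + 2r(N) - 1`
vertices for a binary network. That exactly two vertices disappear only depends on two properties
which every reduction preserves: tails of arcs are vertices, and out-degrees are at most two.

In the unrooted case the same count applies to a rooting, which has `|V| + 1` vertices when there
are edges; the preserved properties are that edges join vertices and degrees are at most three.
Moreover `|E| - |V|` never increases along the sequence and ends at `-1`, so `|E| ≥ |V| - 1`, which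
makes the truncated subtraction in `r(U) = |E| - (|V| - 1)` harmless. -/

open Finset

namespace Finset

variable {α : Type*} [DecidableEq α]

theorem card_filter_insert_sdiff_le {s t : Finset α} {x : α} (p : α → Prop) [DecidablePred p]
    (hx : p x → ∃ y ∈ s, y ∈ t ∧ p y) : #((insert x (s \ t)).filter p) ≤ #(s.filter p) := by
  rw [filter_insert]
  split_ifs with hpx
  · obtain ⟨y, hys, hyt, hpy⟩ := hx hpx
    calc #(insert x ((s \ t).filter p)) ≤ #((s.filter p).erase y) + 1 := by
          refine (card_insert_le _ _).trans (Nat.add_le_add_right (card_le_card ?_) 1)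
          intro z hz
          simp only [mem_filter, mem_sdiff] at hz
          exact mem_erase.2 ⟨by rintro rfl; exact hz.1.2 hyt, mem_filter.2 ⟨hz.1.1, hz.2⟩⟩
      _ = #(s.filter p) := card_erase_add_one (mem_filter.2 ⟨hys, hpy⟩)
  · exact card_le_card (filter_subset_filter _ sdiff_subset)

theorem card_insert_sdiff_add_card_le {s t : Finset α} (x : α) (hts : t ⊆ s) :
    #(insert x (s \ t)) + #t ≤ #s + 1 := by
  have := card_insert_le x (s \ t)
  have := card_le_card hts
  rw [card_sdiff_of_subset hts] at *
  omega

theorem card_sdiff_pair_add_two {s : Finset α} {a b : α} (ha : a ∈ s) (hb : b ∈ s) (hab : a ≠ b) :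
    #(s \ {a, b}) + 2 = #s := by
  have hsub : {a, b} ⊆ s := insert_subset ha (singleton_subset_iff.2 hb)
  have := card_le_card hsub
  rw [card_sdiff_of_subset hsub, card_pair hab] at *
  omega

end Finset

namespace DNet

variable {N M : DNet} {u v c c₁ c₂ : ℕ}

theorem outDeg_pos (h : (v, c) ∈ N.arcs) : 0 < N.outDeg v :=
  card_pos.2 ⟨_, mem_filter.2 ⟨h, rfl⟩⟩

theorem fst_ne_of_outDeg_eq_zero (h : (u, v) ∈ N.arcs) (hc : N.outDeg c = 0) : u ≠ c := by
  rintro rfl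
  exact (outDeg_pos h).ne' hc

theorem eq_of_outDeg_le_one (h : N.outDeg v ≤ 1) (h₁ : (v, c₁) ∈ N.arcs)
    (h₂ : (v, c₂) ∈ N.arcs) : c₁ = c₂ := by
  have := card_le_one.1 h _ (mem_filter.2 ⟨h₁, rfl⟩) _ (mem_filter.2 ⟨h₂, rfl⟩)
  exact (Prod.ext_iff.1 this).2

theorem eq_or_eq_of_outDeg_le_two (h : N.outDeg v ≤ 2) (h₁ : (v, c₁) ∈ N.arcs)
    (h₂ : (v, c₂) ∈ N.arcs) (hne : c₁ ≠ c₂) {c : ℕ} (hc : (v, c) ∈ N.arcs) : c = c₁ ∨ c = c₂ := by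
  have hsub : {(v, c₁), (v, c₂)} ⊆ N.arcs.filter (·.1 = v) :=
    insert_subset (mem_filter.2 ⟨h₁, rfl⟩) (singleton_subset_iff.2 (mem_filter.2 ⟨h₂, rfl⟩))
  have hcard : #(N.arcs.filter (·.1 = v)) ≤ #{(v, c₁), (v, c₂)} := by
    rw [card_pair (by simpa using hne)]; exact h
  have hmem : (v, c) ∈ N.arcs.filter (·.1 = v) := mem_filter.2 ⟨hc, rfl⟩
  rw [← eq_of_subset_of_card_le hsub hcard] at hmem
  simpa using hmem

theorem outDeg_le_of_subset_insert_sdiff {x : ℕ × ℕ} {t : Finset (ℕ × ℕ)}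
    (hM : M.arcs ⊆ insert x (N.arcs \ t)) (hx : ∃ y ∈ N.arcs, y ∈ t ∧ y.1 = x.1) (v : ℕ) :
    M.outDeg v ≤ N.outDeg v :=
  (card_le_card (filter_subset_filter _ hM)).trans <|
    card_filter_insert_sdiff_le _ fun hxv => hx.imp fun _ ⟨hy, hyt, hyx⟩ => ⟨hy, hyt, hyx.trans hxv⟩

structure IsOutBinary (N : DNet) : Prop where
  fst_mem : ∀ {u v}, (u, v) ∈ N.arcs → u ∈ N.verts
  outDeg_le_two : ∀ v, N.outDeg v ≤ 2

end DNet

open DNet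

theorem RReduceCherry.isOutBinary_and_card {N M : DNet} {a b : ℕ} (hN : N.IsOutBinary)
    (h : RReduceCherry N M a b) : M.IsOutBinary ∧ #M.verts + 2 = #N.verts := by
  obtain ⟨⟨hab, ⟨haV, -, haOut⟩, ⟨-, -, hbOut⟩, -⟩, p, hpa, hpb, hM⟩ := h
  have hpa' : p ≠ a := fst_ne_of_outDeg_eq_zero hpa haOut
  have hpb' : p ≠ b := fst_ne_of_outDeg_eq_zero hpb hbOut
  have hpOut : ∀ {c}, (p, c) ∈ N.arcs → c = a ∨ c = b :=
    eq_or_eq_of_outDeg_le_two (hN.outDeg_le_two p) hpa hpb hab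
  have hold : ∀ {x y}, (x, y) ∈ N.arcs → (x, y) ≠ (p, a) → (x, y) ≠ (p, b) →
      x ∈ N.verts \ {a, p} := by
    intro x y hxy hxa hxb
    simp only [mem_sdiff, mem_insert, mem_singleton, not_or]
    refine ⟨hN.fst_mem hxy, fst_ne_of_outDeg_eq_zero hxy haOut, ?_⟩
    rintro rfl
    rcases hpOut hxy with rfl | rfl
    exacts [hxa rfl, hxb rfl]
  have hcard : #(N.verts \ {a, p}) + 2 = #N.verts :=
    card_sdiff_pair_add_two haV (hN.fst_mem hpa) hpa'.symm
  rcases hM with ⟨-, hMv, hMa⟩ | ⟨g, hgp, hMv, hMa⟩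
  · refine ⟨⟨fun hxy => hMv ▸ ?_, fun v => ?_⟩, hMv ▸ hcard⟩
    · rw [hMa, mem_sdiff] at hxy
      simp only [mem_insert, mem_singleton, not_or] at hxy
      exact hold hxy.1 hxy.2.1 hxy.2.2
    · exact (card_le_card (filter_subset_filter _ (hMa ▸ sdiff_subset))).trans
        (hN.outDeg_le_two v)
  · have hgp' : g ≠ p := by
      rintro rfl
      rcases hpOut hgp with rfl | rfl <;> contradiction
    have hga : g ≠ a := fst_ne_of_outDeg_eq_zero hgp haOut
    refine ⟨⟨fun hxy => hMv ▸ ?_, fun v => (outDeg_le_of_subset_insert_sdiff hMa.le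
      ⟨(g, p), hgp, mem_insert_self _ _, rfl⟩ v).trans (hN.outDeg_le_two v)⟩, hMv ▸ hcard⟩
    rw [hMa, mem_insert, mem_sdiff] at hxy
    rcases hxy with hxy | ⟨hxy, hnot⟩
    · obtain ⟨rfl, rfl⟩ := Prod.mk.inj hxy
      simp [hN.fst_mem hgp, hga, hgp']
    · simp only [mem_insert, mem_singleton, not_or] at hnot
      exact hold hxy hnot.2.1 hnot.2.2

theorem RReduceRetCherry.isOutBinary_and_card {N M : DNet} {a b : ℕ} (hN : N.IsOutBinary)
    (h : RReduceRetCherry N M a b) : M.IsOutBinary ∧ #M.verts + 2 = #N.verts := by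
  obtain ⟨⟨hab, ⟨-, -, haOut⟩, ⟨-, -, hbOut⟩, -⟩, pa, pb, qa, qb, hpa, hpb, ⟨hpaV, -, hpaOut⟩,
    hpbpa, hqa, hqapb, hqb, hMv, hMa⟩ := h
  have hpaOut' : ∀ {c}, (pa, c) ∈ N.arcs → c = a := (eq_of_outDeg_le_one hpaOut.le · hpa)
  have hpab : pa ≠ b := fst_ne_of_outDeg_eq_zero hpa hbOut
  have hpbOut : ∀ {c}, (pb, c) ∈ N.arcs → c = b ∨ c = pa :=
    eq_or_eq_of_outDeg_le_two (hN.outDeg_le_two pb) hpb hpbpa hpab.symm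
  have hpapb : pa ≠ pb := by
    rintro rfl
    exact hab (hpaOut' hpb).symm
  have hpba : pb ≠ a := fst_ne_of_outDeg_eq_zero hpb haOut
  have hpbb : pb ≠ b := fst_ne_of_outDeg_eq_zero hpb hbOut
  have hqapa : qa ≠ pa := by
    rintro rfl
    exact fst_ne_of_outDeg_eq_zero hpa haOut (hpaOut' hqa)
  have hqbpb : qb ≠ pb := by
    rintro rfl
    rcases hpbOut hqb with h | h
    exacts [hpbb h, hpapb h.symm]
  have hqbpa : qb ≠ pa := by
    rintro rfl
    exact hpba (hpaOut' hqb)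
  -- the reduction suppresses `pb` first and then `pa`
  let N₁ : DNet := ⟨N.verts, insert (qb, b) (N.arcs \ {(qb, pb)})⟩
  have hN₁ (v : ℕ) : N₁.outDeg v ≤ N.outDeg v :=
    outDeg_le_of_subset_insert_sdiff (x := (qb, b)) subset_rfl
      ⟨(qb, pb), hqb, mem_singleton_self _, rfl⟩ v
  have hMN₁ : M.arcs ⊆ insert (qa, a) (N₁.arcs \ {(qa, pa)}) := by
    intro z hz
    rw [hMa] at hz
    simp only [N₁, mem_insert, mem_sdiff, mem_singleton] at hz ⊢
    aesop
  have hM (v : ℕ) : M.outDeg v ≤ N.outDeg v :=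
    (outDeg_le_of_subset_insert_sdiff hMN₁
      ⟨(qa, pa), by simp [N₁, hqa, hpapb], mem_singleton_self _, rfl⟩ v).trans (hN₁ v)
  refine ⟨⟨fun {x y} hxy => hMv ▸ ?_, fun v => (hM v).trans (hN.outDeg_le_two v)⟩,
    hMv ▸ card_sdiff_pair_add_two hpaV (hN.fst_mem hpb) hpapb⟩
  rw [hMa] at hxy
  simp only [mem_insert, mem_sdiff, mem_singleton, Prod.mk.injEq, not_or] at hxy ⊢
  rcases hxy with ⟨rfl, rfl⟩ | ⟨rfl, rfl⟩ | ⟨hxy, hnot⟩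
  · exact ⟨hN.fst_mem hqa, hqapa, hqapb⟩
  · exact ⟨hN.fst_mem hqb, hqbpa, hqbpb⟩
  · refine ⟨hN.fst_mem hxy, ?_, ?_⟩ <;> rintro rfl
    · have := hpaOut' hxy; simp_all
    · rcases hpbOut hxy with rfl | rfl <;> simp_all

theorem RStep.isOutBinary_and_card {N M : DNet} {r : Pick} (hN : N.IsOutBinary)
    (h : RStep N M r) : M.IsOutBinary ∧ #M.verts + 2 = #N.verts := by
  cases r with
  | cherry a b => exact RReduceCherry.isOutBinary_and_card hN h
  | ret a b => exact RReduceRetCherry.isOutBinary_and_card hN h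

theorem IsRootedBinaryNet.isOutBinary {N : DNet} {X : Finset ℕ} (h : IsRootedBinaryNet N X) :
    N.IsOutBinary := by
  rcases h with ⟨x, -, -, hA⟩ | ⟨hend, -, -, -, hclass, -⟩
  · exact ⟨by simp [hA], fun v => by simp [DNet.outDeg, hA]⟩
  · refine ⟨fun hq => (hend _ hq).1, fun v => ?_⟩
    by_cases hv : v ∈ N.verts
    · rcases hclass v hv with ⟨-, -, h⟩ | ⟨-, -, h⟩ | ⟨-, -, h⟩ | ⟨-, -, h⟩ <;> omega
    · suffices N.outDeg v = 0 by omega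
      rw [DNet.outDeg, card_eq_zero, filter_eq_empty_iff]
      rintro q hq rfl
      exact hv (hend q hq).1

theorem IsRootedBinaryNet.card_verts_add_one {N : DNet} {X : Finset ℕ}
    (h : IsRootedBinaryNet N X) : #N.verts + 1 = 2 * #X + 2 * N.retNum := by
  rcases h with ⟨x, rfl, hV, hA⟩ | ⟨hend, -, -, ⟨ρ, hρ, hρu⟩, hclass, hX⟩
  · simp [DNet.retNum, DNet.inDeg, hV, hA]
  have hroot : #(N.verts.filter (N.inDeg · = 0)) = 1 :=
    card_eq_one.2 ⟨ρ, by ext v; simpa using ⟨hρu v, fun h => h ▸ hρ⟩⟩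
  have hleaves : #(N.verts.filter (· ∈ X)) = #X := by
    rw [filter_mem_eq_inter, inter_eq_right.2 fun x hx => ((hX x).2 hx).1]
  have hin : ∑ v ∈ N.verts, N.inDeg v = #N.arcs :=
    (card_eq_sum_card_fiberwise fun q hq => (hend q hq).2).symm
  have hout : ∑ v ∈ N.verts, N.outDeg v = #N.arcs :=
    (card_eq_sum_card_fiberwise fun q hq => (hend q hq).1).symm
  have hvert : ∀ v ∈ N.verts, 1 + N.inDeg v + (if N.inDeg v = 0 then 1 else 0) =
      N.outDeg v + 2 * (if v ∈ X then 1 else 0) + 2 * (if N.inDeg v = 2 then 1 else 0) := by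
    intro v hv
    have hleaf : N.inDeg v = 1 ∧ N.outDeg v = 0 ↔ v ∈ X := by
      rw [← hX v, DNet.IsLeaf, and_iff_right hv]
    rcases hclass v hv with ⟨-, h1, h2⟩ | ⟨-, h1, h2⟩ | ⟨-, h1, h2⟩ | ⟨-, h1, h2⟩ <;>
      simp only [h1, h2] at hleaf ⊢ <;> simp [← hleaf]
  have := sum_congr rfl hvert
  simp only [sum_add_distrib, ← mul_sum, ← card_filter, sum_const, smul_eq_mul, mul_one] at this
  rw [DNet.retNum]
  omega

theorem RReductionSeq.isOutBinary_and_card {Ns : ℕ → DNet} {k : ℕ} (h : RReductionSeq Ns k)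
    (h0 : (Ns 0).IsOutBinary) :
    ∀ i ≤ k, (Ns i).IsOutBinary ∧ #(Ns i).verts + 2 * i = #(Ns 0).verts := by
  intro i hi
  induction i with
  | zero => exact ⟨h0, rfl⟩
  | succ i ih =>
    obtain ⟨hNi, hcard⟩ := ih (by omega)
    obtain ⟨r, hr⟩ := h i (by omega)
    obtain ⟨hNi', hstep⟩ := hr.isOutBinary_and_card hNi
    exact ⟨hNi', by omega⟩

theorem RReductionSeq.length_eq {Ns : ℕ → DNet} {X : Finset ℕ} {k : ℕ}
    (h0 : IsRootedBinaryNet (Ns 0) X) (h : RReductionSeq Ns k) (hk : (Ns k).SingleVertex) :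
    k = #X + (Ns 0).retNum - 1 := by
  have hcard := (h.isOutBinary_and_card h0.isOutBinary k le_rfl).2
  have := h0.card_verts_add_one
  rw [hk.1] at hcard
  omega

namespace UNet

variable {U W : UNet} {e₁ e₂ e₃ : Sym2 ℕ} {w : ℕ}

theorem eq_of_deg_le_one (h : U.deg w ≤ 1) (he₁ : e₁ ∈ U.edges) (hw₁ : w ∈ e₁)
    (he₂ : e₂ ∈ U.edges) (hw₂ : w ∈ e₂) : e₁ = e₂ :=
  card_le_one.1 h _ (mem_filter.2 ⟨he₁, hw₁⟩) _ (mem_filter.2 ⟨he₂, hw₂⟩)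

theorem eq_or_eq_or_eq_of_deg_le_three (h : U.deg w ≤ 3) (he₁ : e₁ ∈ U.edges) (hw₁ : w ∈ e₁)
    (he₂ : e₂ ∈ U.edges) (hw₂ : w ∈ e₂) (he₃ : e₃ ∈ U.edges) (hw₃ : w ∈ e₃)
    (h₁₂ : e₁ ≠ e₂) (h₁₃ : e₁ ≠ e₃) (h₂₃ : e₂ ≠ e₃) {e : Sym2 ℕ} (he : e ∈ U.edges)
    (hw : w ∈ e) : e = e₁ ∨ e = e₂ ∨ e = e₃ := by
  have hsub : {e₁, e₂, e₃} ⊆ U.edges.filter (w ∈ ·) := by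
    simp [insert_subset_iff, *]
  have hcard : #(U.edges.filter (w ∈ ·)) ≤ #{e₁, e₂, e₃} := by
    rw [card_eq_three.2 ⟨_, _, _, h₁₂, h₁₃, h₂₃, rfl⟩]; exact h
  have hmem : e ∈ U.edges.filter (w ∈ ·) := mem_filter.2 ⟨he, hw⟩
  rw [← eq_of_subset_of_card_le hsub hcard] at hmem
  simpa using hmem

theorem deg_le_of_subset_insert_sdiff {x : Sym2 ℕ} {t : Finset (Sym2 ℕ)}
    (hW : W.edges ⊆ insert x (U.edges \ t)) (hx : ∀ w ∈ x, ∃ e ∈ U.edges, e ∈ t ∧ w ∈ e)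
    (w : ℕ) : W.deg w ≤ U.deg w :=
  (card_le_card (filter_subset_filter _ hW)).trans (card_filter_insert_sdiff_le _ (hx w))

theorem deg_le_and_card_lt_of_subset_insert_sdiff_pair {x y z : Sym2 ℕ}
    (hW : W.edges ⊆ insert x (U.edges \ {y, z})) (hy : y ∈ U.edges) (hz : z ∈ U.edges)
    (hyz : y ≠ z) (hx : ∀ w ∈ x, w ∈ y ∨ w ∈ z) :
    (∀ w, W.deg w ≤ U.deg w) ∧ #W.edges < #U.edges := by
  refine ⟨deg_le_of_subset_insert_sdiff hW fun w hw => ?_, ?_⟩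
  · rcases hx w hw with h | h
    exacts [⟨y, hy, by simp, h⟩, ⟨z, hz, by simp, h⟩]
  · have := card_insert_sdiff_add_card_le x (insert_subset hy (singleton_subset_iff.2 hz))
    rw [card_pair hyz] at this
    have := card_le_card hW
    omega

theorem sum_deg (hU : ∀ e ∈ U.edges, ¬e.IsDiag ∧ ∀ w ∈ e, w ∈ U.verts) :
    ∑ w ∈ U.verts, U.deg w = 2 * #U.edges := by
  calc ∑ w ∈ U.verts, U.deg w = ∑ e ∈ U.edges, #(U.verts.filter (· ∈ e)) :=
        sum_card_bipartiteAbove_eq_sum_card_bipartiteBelow (fun w e => w ∈ e)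
    _ = #U.edges * 2 := sum_const_nat fun e he => by
        rw [← Sym2.card_toFinset_of_not_isDiag e (hU e he).1]
        congr 1
        ext w
        simpa using fun hw => (hU e he).2 w hw
    _ = 2 * #U.edges := mul_comm _ _

structure IsSubcubic (U : UNet) : Prop where
  mem_verts : ∀ {e}, e ∈ U.edges → ∀ w ∈ e, w ∈ U.verts
  deg_le_three : ∀ w, U.deg w ≤ 3

/-- The number of vertices of a rooting of `U` (the root subdivides an edge, if there is one). -/
def rootedCard (U : UNet) : ℕ := #U.verts + if U.edges = ∅ then 0 else 1

end UNet

open UNet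

theorem UReduceCherry.isSubcubic_and_card {U W : UNet} {a b : ℕ} (hU : U.IsSubcubic)
    (h : UReduceCherry U W a b) : W.IsSubcubic ∧ W.rootedCard + 2 = U.rootedCard ∧
      #W.edges + #U.verts ≤ #U.edges + #W.verts := by
  obtain ⟨⟨hab, ⟨haV, haDeg⟩, ⟨hbV, -⟩, -⟩, hW⟩ := h
  rcases hW with ⟨hE, hWv, hWe⟩ | ⟨p, g, hap, hbp, hpg, hpa, hpb, hga, hgb, hgp, hWv, hWe⟩
  · have hcard : #(U.verts \ {a}) + 1 = #U.verts := by
      rw [sdiff_singleton_eq_erase, card_erase_add_one haV]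
    refine ⟨⟨by simp [hWe], fun w => by simp [UNet.deg, hWe]⟩, ?_, ?_⟩ <;>
      simp [rootedCard, hWv, hWe, hE] <;> omega
  have hpV := hU.mem_verts hap p (by simp)
  have hgV := hU.mem_verts hpg g (by simp)
  have haE : ∀ {e}, e ∈ U.edges → a ∈ e → e = s(a, p) :=
    (eq_of_deg_le_one haDeg.le · · hap (by simp))
  have hpE : ∀ {e}, e ∈ U.edges → p ∈ e → e = s(a, p) ∨ e = s(b, p) ∨ e = s(p, g) :=
    eq_or_eq_or_eq_of_deg_le_three (hU.deg_le_three p) hap (by simp) hbp (by simp) hpg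
      (by simp) (by simp; omega) (by simp; omega) (by simp; omega)
  have hT : #{s(a, p), s(b, p), s(p, g)} = 3 :=
    card_eq_three.2 ⟨_, _, _, by simp; omega, by simp; omega, by simp; omega, rfl⟩
  have hTE : {s(a, p), s(b, p), s(p, g)} ⊆ U.edges := by simp [insert_subset_iff, *]
  have hedges := card_insert_sdiff_add_card_le s(b, g) hTE
  have hverts := card_sdiff_pair_add_two haV hpV hpa.symm
  refine ⟨⟨fun {e} he w hw => hWv ▸ ?_, fun w => ?_⟩, ?_, ?_⟩
  · rw [hWe, mem_insert, mem_sdiff] at he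
    rcases he with rfl | ⟨he, hnot⟩
    · simp only [Sym2.mem_iff] at hw
      rcases hw with rfl | rfl
      exacts [by simp [hbV, hab.symm, hpb.symm], by simp [hgV, hga, hgp]]
    · simp only [mem_sdiff, mem_insert, mem_singleton, not_or]
      refine ⟨hU.mem_verts he w hw, ?_, ?_⟩ <;> rintro rfl
      · exact hnot (by simp [haE he hw])
      · rcases hpE he hw with rfl | rfl | rfl <;> simp at hnot
  · refine (deg_le_of_subset_insert_sdiff hWe.le (fun w hw => ?_) w).trans (hU.deg_le_three w)
    rcases Sym2.mem_iff.1 hw with rfl | rfl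
    exacts [⟨_, hbp, by simp, by simp⟩, ⟨_, hpg, by simp, by simp⟩]
  · simp [rootedCard, hWv, hWe, ne_empty_of_mem hap, hverts.symm]
  · rw [hWe, hWv, hT] at *; omega

theorem UReduceRetCherry.isSubcubic_and_card {U W : UNet} {a b : ℕ} (hU : U.IsSubcubic)
    (h : UReduceRetCherry U W a b) : W.IsSubcubic ∧ W.rootedCard + 2 = U.rootedCard ∧
      #W.edges + #U.verts ≤ #U.edges + #W.verts := by
  obtain ⟨⟨hab, ⟨haV, haDeg⟩, ⟨hbV, hbDeg⟩, -⟩, u, v, ga, gb, hau, huv, hvb, hu_v, hua, hv_b, -,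
    huga, hgaa, hgav, hgau, hvgb, hgbb, hgbu, hgbv, hWv, hWe⟩ := h
  have haE : ∀ {e}, e ∈ U.edges → a ∈ e → e = s(a, u) :=
    (eq_of_deg_le_one haDeg.le · · hau (by simp))
  have hbE : ∀ {e}, e ∈ U.edges → b ∈ e → e = s(v, b) :=
    (eq_of_deg_le_one hbDeg.le · · hvb (by simp))
  -- otherwise the leaf `a` (resp. `b`) would lie on a second edge `s(v, gb)` (resp. `s(u, ga)`)
  have hva : v ≠ a := by
    rintro rfl
    have := haE hvgb (by simp)
    simp at this
    omega
  have hub : u ≠ b := by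
    rintro rfl
    have := hbE huga (by simp)
    simp at this
    omega
  have huV := hU.mem_verts huv u (by simp)
  have hvV := hU.mem_verts huv v (by simp)
  have hgaV := hU.mem_verts huga ga (by simp)
  have hgbV := hU.mem_verts hvgb gb (by simp)
  have huE : ∀ {e}, e ∈ U.edges → u ∈ e → e = s(a, u) ∨ e = s(u, v) ∨ e = s(u, ga) :=
    eq_or_eq_or_eq_of_deg_le_three (hU.deg_le_three u) hau (by simp) huv (by simp) huga
      (by simp) (by simp; omega) (by simp; omega) (by simp; omega)
  have hvE : ∀ {e}, e ∈ U.edges → v ∈ e → e = s(u, v) ∨ e = s(v, b) ∨ e = s(v, gb) :=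
    eq_or_eq_or_eq_of_deg_le_three (hU.deg_le_three v) huv (by simp) hvb (by simp) hvgb
      (by simp) (by simp; omega) (by simp; omega) (by simp; omega)
  -- the reduction suppresses `v` first and then `u`
  let U₁ : UNet := ⟨U.verts, insert s(b, gb) (U.edges \ {s(v, b), s(v, gb)})⟩
  obtain ⟨hdeg₁, hcard₁⟩ := deg_le_and_card_lt_of_subset_insert_sdiff_pair (W := U₁) subset_rfl
    hvb hvgb (by simp; omega) (by simp)
  have haU₁ : s(a, u) ∈ U₁.edges := by simp [U₁, hau]; omega
  have hgaU₁ : s(u, ga) ∈ U₁.edges := by simp [U₁, huga]; omega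
  have hWU₁ : W.edges ⊆ insert s(a, ga) (U₁.edges \ {s(a, u), s(u, ga)}) := by
    intro e he
    rw [hWe] at he
    simp only [U₁, mem_insert, mem_sdiff, mem_singleton] at he ⊢
    rcases he with rfl | rfl | ⟨he, hnot⟩
    · exact Or.inl rfl
    · right; simp; omega
    · right; tauto
  obtain ⟨hdeg₂, hcard₂⟩ := deg_le_and_card_lt_of_subset_insert_sdiff_pair hWU₁ haU₁ hgaU₁
    (by simp; omega) (by simp)
  have hverts := card_sdiff_pair_add_two huV hvV hu_v
  refine ⟨⟨fun {e} he w hw => hWv ▸ ?_, fun w => ?_⟩, ?_, ?_⟩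
  · rw [hWe, mem_insert, mem_insert, mem_sdiff] at he
    rcases he with rfl | rfl | ⟨he, hnot⟩
    · rcases Sym2.mem_iff.1 hw with rfl | rfl
      exacts [by simp [haV, hua.symm, hva.symm], by simp [hgaV, hgau, hgav]]
    · rcases Sym2.mem_iff.1 hw with rfl | rfl
      exacts [by simp [hbV, hub.symm, hv_b.symm], by simp [hgbV, hgbu, hgbv]]
    · simp only [mem_sdiff, mem_insert, mem_singleton, not_or]
      refine ⟨hU.mem_verts he w hw, ?_, ?_⟩ <;> rintro rfl
      · rcases huE he hw with rfl | rfl | rfl <;> simp at hnot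
      · rcases hvE he hw with rfl | rfl | rfl <;> simp at hnot
  · exact ((hdeg₂ w).trans (hdeg₁ w)).trans (hU.deg_le_three w)
  · simp [rootedCard, hWv, hWe, ne_empty_of_mem hau, hverts.symm]
  · rw [hWv]
    omega

theorem UStep.isSubcubic_and_card {U W : UNet} {r : Pick} (hU : U.IsSubcubic)
    (h : UStep U W r) : W.IsSubcubic ∧ W.rootedCard + 2 = U.rootedCard ∧
      #W.edges + #U.verts ≤ #U.edges + #W.verts := by
  cases r with
  | cherry a b => exact UReduceCherry.isSubcubic_and_card hU h
  | ret a b => exact UReduceRetCherry.isSubcubic_and_card hU h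

theorem IsUnrootedBinaryNet.isSubcubic {U : UNet} {X : Finset ℕ} (h : IsUnrootedBinaryNet U X) :
    U.IsSubcubic := by
  rcases h with ⟨x, -, -, hE⟩ | ⟨hend, -, hdeg, -⟩
  · exact ⟨by simp [hE], fun w => by simp [UNet.deg, hE]⟩
  · refine ⟨fun he => (hend _ he).2, fun w => ?_⟩
    by_cases hw : w ∈ U.verts
    · rcases hdeg w hw with h | h <;> omega
    · suffices U.deg w = 0 by omega
      rw [UNet.deg, card_eq_zero, filter_eq_empty_iff]
      exact fun e he hwe => hw ((hend e he).2 w hwe)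

theorem IsUnrootedBinaryNet.rootedCard_add_one {U : UNet} {X : Finset ℕ}
    (h : IsUnrootedBinaryNet U X) (hV : #U.verts ≤ #U.edges + 1) (hpos : 0 < U.rootedCard) :
    U.rootedCard + 1 = 2 * (#X + U.retNum) := by
  rcases h with ⟨x, rfl, hV, hE⟩ | ⟨hend, -, hdeg, hX⟩
  · simp [rootedCard, UNet.retNum, hV, hE]
  have hXV : X ⊆ U.verts := fun x hx => ((hX x).2 hx).1
  have hvert : ∀ w ∈ U.verts, 3 = U.deg w + 2 * (if w ∈ X then 1 else 0) := by
    intro w hw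
    have hleaf : U.deg w = 1 ↔ w ∈ X := by rw [← hX w, UNet.IsLeaf, and_iff_right hw]
    rcases hdeg w hw with h | h <;> simp only [h] at hleaf ⊢ <;> simp [← hleaf]
  have hsum := sum_congr rfl hvert
  simp only [sum_add_distrib, ← mul_sum, ← card_filter, sum_const, smul_eq_mul] at hsum
  rw [sum_deg hend, filter_mem_eq_inter, inter_eq_right.2 hXV] at hsum
  have := card_le_card hXV
  simp only [rootedCard, UNet.retNum] at hpos ⊢
  split_ifs at hpos ⊢ with hE
  · rw [hE, card_empty] at hsum
    omega
  · have := card_pos.2 (nonempty_iff_ne_empty.2 hE)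
    omega

theorem UReductionSeq.isSubcubic_and_card {Us : ℕ → UNet} {k : ℕ} (h : UReductionSeq Us k)
    (h0 : (Us 0).IsSubcubic) :
    ∀ i ≤ k, (Us i).IsSubcubic ∧ (Us i).rootedCard + 2 * i = (Us 0).rootedCard ∧
      #(Us i).edges + #(Us 0).verts ≤ #(Us 0).edges + #(Us i).verts := by
  intro i hi
  induction i with
  | zero => exact ⟨h0, rfl, le_rfl⟩
  | succ i ih =>
    obtain ⟨hUi, hweight, hedges⟩ := ih (by omega)
    obtain ⟨r, hr⟩ := h i (by omega)
    obtain ⟨hUi', hweight', hedges'⟩ := hr.isSubcubic_and_card hUi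
    exact ⟨hUi', by omega, by omega⟩

theorem UReductionSeq.length_eq {Us : ℕ → UNet} {X : Finset ℕ} {k : ℕ}
    (h0 : IsUnrootedBinaryNet (Us 0) X) (h : UReductionSeq Us k) (hk : (Us k).SingleVertex) :
    k = #X + (Us 0).retNum - 1 := by
  obtain ⟨-, hweight, hedges⟩ := h.isSubcubic_and_card h0.isSubcubic k le_rfl
  have hk' : (Us k).rootedCard = 1 := by simp [rootedCard, hk.1, hk.2]
  rw [hk.1, hk.2, card_empty] at hedges
  have := h0.rootedCard_add_one (by omega) (by omega)
  omega

/-- A complete cherry-reduction sequence of length `k` for a phylogenetic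
network `N` on `X` satisfies `k = |X| + r(N) - 1` (rooted and unrooted case). -/
theorem complete_sequence_length :
    (∀ (Ns : ℕ → DNet) (X : Finset ℕ) (k : ℕ),
      IsRootedBinaryNet (Ns 0) X → RReductionSeq Ns k → (Ns k).SingleVertex →
      k = X.card + (Ns 0).retNum - 1) ∧
    (∀ (Us : ℕ → UNet) (X : Finset ℕ) (k : ℕ),
      IsUnrootedBinaryNet (Us 0) X → UReductionSeq Us k → (Us k).SingleVertex →
      k = X.card + (Us 0).retNum - 1) :=
  ⟨fun _ _ _ => RReductionSeq.length_eq, fun _ _ _ => UReductionSeq.length_eq⟩
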